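/- arXiv:2112.03092 — 2 statements merged into one kernel-verified Lean document; each statement's English description precedes it below -/
import Mathlib

section
/- (Lemma 3) Let T₁, T₂, T₁', T₂', λ₁, λ₂, λ₁', λ₂' > 0 with T₂ ≥ T₁, T₂' ≥ T₁', and λ₁/T₁ = λ₂/T₂ > λ₁'/T₁' = λ₂'/T₂'. Let m₀ = ln(T₁'λ₁/(T₁λ₁')) / (1 + T₁'/T₁) and define T(m,t,t₁,t₁') = e^{t₁(−λ₁ + λ₂ + λ₁ e^{−m T₁'/T₁} − λ₂ e^{−m T₁'/T₂})} · e^{t₁'(λ₁' e^m − λ₂' e^{m T₁'/T₂'} − λ₁' + λ₂')} · e^{t(λ₂' e^{m T₁'/T₂'} − λ₂ − λ₂' + λ₂ e^{−m T₁'/T₂})}. Then for any fixed t₁ ≥ 0 and t₁' ≥ 0, T(m₀,t,t₁,t₁') tends to 0 as t → ∞. -/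
open Real Filter Topology

/-!
The coefficient of `t` is `f m₀` for `f m = λ₂' (e^{m T₁'/T₂'} - 1) + λ₂ (e^{-m T₁'/T₂} - 1)`,
a convex function with `f 0 = 0`, so it suffices that `f' m₀ ≤ 0`. Writing `μ = λ₁/T₁` and
`μ' = λ₁'/T₁'`, the point `m₀` is chosen so that `μ' e^{m₀} = μ e^{-m₀ T₁'/T₁}`; together with
`T₁'/T₂' ≤ 1` and `T₁'/T₂ ≤ T₁'/T₁` this gives `μ' e^{m₀ T₁'/T₂'} ≤ μ e^{-m₀ T₁'/T₂}`, which is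
`f' m₀ ≤ 0` up to the factor `T₁'`.
-/

theorem Real.exp_sub_exp_lt_sub_mul_exp {u v : ℝ} (h : u ≠ v) :
    exp u - exp v < (u - v) * exp u := by
  have hline : v - u + 1 < exp (v - u) := add_one_lt_exp (sub_ne_zero.mpr h.symm)
  have hv : exp v = exp (v - u) * exp u := by rw [← exp_add, sub_add_cancel]
  nlinarith [exp_pos u]

theorem mul_exp_sub_one_add_mul_exp_neg_sub_one_neg {A B a b m : ℝ} (hA : 0 < A) (hB : 0 ≤ B)
    (ha : a ≠ 0) (hm : 0 < m) (hderiv : A * a * exp (m * a) ≤ B * b * exp (-m * b)) :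
    A * (exp (m * a) - 1) + B * (exp (-m * b) - 1) < 0 := by
  have hA' : exp (m * a) - exp 0 < (m * a - 0) * exp (m * a) :=
    exp_sub_exp_lt_sub_mul_exp (mul_ne_zero hm.ne' ha)
  have hB' : exp (-m * b) - exp 0 ≤ (-m * b - 0) * exp (-m * b) := by
    rcases eq_or_ne (-m * b) 0 with h | h
    · simp [h]
    · exact (exp_sub_exp_lt_sub_mul_exp h).le
  rw [exp_zero, sub_zero] at hA' hB'
  calc A * (exp (m * a) - 1) + B * (exp (-m * b) - 1)
      < A * (m * a * exp (m * a)) + B * (-m * b * exp (-m * b)) :=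
        add_lt_add_of_lt_of_le (mul_lt_mul_of_pos_left hA' hA) (mul_le_mul_of_nonneg_left hB' hB)
    _ = m * (A * a * exp (m * a) - B * b * exp (-m * b)) := by ring
    _ ≤ 0 := mul_nonpos_of_nonneg_of_nonpos hm.le (sub_nonpos.mpr hderiv)

theorem mul_exp_log_div_one_add {μ μ' q : ℝ} (hμ : 0 < μ) (hμ' : 0 < μ') (hq : 1 + q ≠ 0) :
    μ' * exp (log (μ / μ') / (1 + q)) = μ * exp (-(log (μ / μ') / (1 + q)) * q) := by
  have hsplit : log (μ / μ') / (1 + q) = log (μ / μ') + -(log (μ / μ') / (1 + q)) * q := by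
    field_simp
    ring
  conv_lhs => rw [hsplit, exp_add, exp_log (div_pos hμ hμ')]
  field_simp

theorem mul_exp_mul_le_mul_exp_neg_mul {μ μ' q a b m : ℝ} (hμ : 0 ≤ μ) (hμ' : 0 ≤ μ')
    (hm : 0 ≤ m) (ha : a ≤ 1) (hb : b ≤ q) (hbalance : μ' * exp m = μ * exp (-m * q)) :
    μ' * exp (m * a) ≤ μ * exp (-m * b) :=
  calc μ' * exp (m * a) ≤ μ' * exp m := by gcongr; nlinarith
    _ = μ * exp (-m * q) := hbalance
    _ ≤ μ * exp (-m * b) := by gcongr μ * exp ?_; nlinarith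

theorem lemma3_T_tendsto_zero_general (T₁ T₂ T₁' T₂' lam₁ lam₂ lam₁' lam₂' : ℝ)
    (hT₁ : 0 < T₁) (hT₁' : 0 < T₁') (hT₂' : 0 < T₂')
    (hlam₁ : 0 < lam₁) (hlam₂ : 0 < lam₂) (hlam₁' : 0 < lam₁') (hlam₂' : 0 < lam₂')
    (hT : T₁ ≤ T₂) (hT' : T₁' ≤ T₂')
    (hrate : lam₁ / T₁ = lam₂ / T₂) (hrate' : lam₁' / T₁' = lam₂' / T₂')
    (hlt : lam₁' / T₁' < lam₁ / T₁)
    (m₀ : ℝ) (hm₀ : m₀ = Real.log (T₁' * lam₁ / (T₁ * lam₁')) / (1 + T₁' / T₁))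
    (Tf : ℝ → ℝ → ℝ → ℝ → ℝ)
    (hTf : ∀ m t t₁ t₁', Tf m t t₁ t₁' =
      Real.exp (t₁ * (-lam₁ + lam₂ + lam₁ * Real.exp (-m * (T₁' / T₁)) -
          lam₂ * Real.exp (-m * (T₁' / T₂)))) *
        Real.exp (t₁' * (lam₁' * Real.exp m - lam₂' * Real.exp (m * (T₁' / T₂')) -
          lam₁' + lam₂')) *
        Real.exp (t * (lam₂' * Real.exp (m * (T₁' / T₂')) - lam₂ - lam₂' +
          lam₂ * Real.exp (-m * (T₁' / T₂)))))
    (t₁ t₁' : ℝ) :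
    Tendsto (fun t => Tf m₀ t t₁ t₁') atTop (𝓝 0) := by
  have hratio : T₁' * lam₁ / (T₁ * lam₁') = (lam₁ / T₁) / (lam₁' / T₁') := by
    field_simp
  have hm₀_pos : 0 < m₀ := by
    rw [hm₀, hratio]
    exact div_pos (log_pos ((one_lt_div (by positivity)).mpr hlt)) (by positivity)
  have hbalance : lam₁' / T₁' * exp m₀ = lam₁ / T₁ * exp (-m₀ * (T₁' / T₁)) := by
    rw [hm₀, hratio]
    exact mul_exp_log_div_one_add (by positivity) (by positivity) (by positivity)
  have hderiv : lam₂' * (T₁' / T₂') * exp (m₀ * (T₁' / T₂')) ≤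
      lam₂ * (T₁' / T₂) * exp (-m₀ * (T₁' / T₂)) := by
    have hcross := mul_exp_mul_le_mul_exp_neg_mul (by positivity) (by positivity) hm₀_pos.le
      ((div_le_one hT₂').mpr hT') (div_le_div_of_nonneg_left hT₁'.le hT₁ hT) hbalance
    rw [hrate', hrate] at hcross
    calc lam₂' * (T₁' / T₂') * exp (m₀ * (T₁' / T₂'))
        = T₁' * (lam₂' / T₂' * exp (m₀ * (T₁' / T₂'))) := by ring
      _ ≤ T₁' * (lam₂ / T₂ * exp (-m₀ * (T₁' / T₂))) := by gcongr
      _ = lam₂ * (T₁' / T₂) * exp (-m₀ * (T₁' / T₂)) := by ring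
  have hcoeff :
      lam₂' * exp (m₀ * (T₁' / T₂')) - lam₂ - lam₂' + lam₂ * exp (-m₀ * (T₁' / T₂)) < 0 := by
    linarith [mul_exp_sub_one_add_mul_exp_neg_sub_one_neg hlam₂' hlam₂.le
      (div_pos hT₁' hT₂').ne' hm₀_pos hderiv]
  have hdecay : Tendsto (fun t => exp (t * (lam₂' * exp (m₀ * (T₁' / T₂')) - lam₂ - lam₂' +
      lam₂ * exp (-m₀ * (T₁' / T₂))))) atTop (𝓝 0) :=
    tendsto_exp_atBot.comp (tendsto_id.atTop_mul_const_of_neg hcoeff)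
  simpa only [hTf, mul_zero] using hdecay.const_mul _

/-- Lemma 3: Let `T₁, T₂, T₁', T₂', λ₁, λ₂, λ₁', λ₂' > 0` with `T₂ ≥ T₁`,
`T₂' ≥ T₁'`, and `λ₁/T₁ = λ₂/T₂ > λ₁'/T₁' = λ₂'/T₂'`. Let
`m₀ = ln(T₁' λ₁ / (T₁ λ₁')) / (1 + T₁'/T₁)` and let `T(m,t,t₁,t₁')` be the product of
exponentials defined in the LightSync security analysis. Then for any fixed `t₁ ≥ 0` and
`t₁' ≥ 0`, `T(m₀,t,t₁,t₁') → 0` as `t → ∞`. -/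
theorem lemma3_T_tendsto_zero (T₁ T₂ T₁' T₂' lam₁ lam₂ lam₁' lam₂' : ℝ)
    (hT₁ : 0 < T₁) (hT₂ : 0 < T₂) (hT₁' : 0 < T₁') (hT₂' : 0 < T₂')
    (hlam₁ : 0 < lam₁) (hlam₂ : 0 < lam₂) (hlam₁' : 0 < lam₁') (hlam₂' : 0 < lam₂')
    (hT : T₁ ≤ T₂) (hT' : T₁' ≤ T₂')
    (hrate : lam₁ / T₁ = lam₂ / T₂) (hrate' : lam₁' / T₁' = lam₂' / T₂')
    (hlt : lam₁' / T₁' < lam₁ / T₁)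
    (m₀ : ℝ) (hm₀ : m₀ = Real.log (T₁' * lam₁ / (T₁ * lam₁')) / (1 + T₁' / T₁))
    (Tf : ℝ → ℝ → ℝ → ℝ → ℝ)
    (hTf : ∀ m t t₁ t₁', Tf m t t₁ t₁' =
      Real.exp (t₁ * (-lam₁ + lam₂ + lam₁ * Real.exp (-m * (T₁' / T₁)) -
          lam₂ * Real.exp (-m * (T₁' / T₂)))) *
        Real.exp (t₁' * (lam₁' * Real.exp m - lam₂' * Real.exp (m * (T₁' / T₂')) -
          lam₁' + lam₂')) *
        Real.exp (t * (lam₂' * Real.exp (m * (T₁' / T₂')) - lam₂ - lam₂' +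
          lam₂ * Real.exp (-m * (T₁' / T₂)))))
    (t₁ t₁' : ℝ) (ht₁ : 0 ≤ t₁) (ht₁' : 0 ≤ t₁') :
    Tendsto (fun t => Tf m₀ t t₁ t₁') atTop (𝓝 0) :=
  lemma3_T_tendsto_zero_general T₁ T₂ T₁' T₂' lam₁ lam₂ lam₁' lam₂' hT₁ hT₁' hT₂' hlam₁ hlam₂ hlam₁'
    hlam₂' hT hT' hrate hrate' hlt m₀ hm₀ Tf hTf t₁ t₁'
end

section
/- (Theorem 1) Fix T₁, T₂, T₁', T₂', λ₁, λ₂, λ₁', λ₂' > 0 with T₂ ≥ T₁, T₂' ≥ T₁', and λ₁/T₁ = λ₂/T₂ > λ₁'/T₁' = λ₂'/T₂', and fix t₁ ≥ 0, t₁' ≥ 0. For each t ≥ max(t₁, t₁'), let N₁(t), N₂(t), N₁'(t), N₂'(t) be independent random variables with Poisson distributions of rates λ₁t₁, λ₂(t − t₁), λ₁'t₁', λ₂'(t − t₁') respectively, and let p(t) = P{ N₁'(t)/T₁' + N₂'(t)/T₂' > N₁(t)/T₁ + N₂(t)/T₂ }. Then p(t) tends to 0 as t → ∞. -/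
/-!
Chernoff bound. Let `D` be the malicious minus the honest difficulty. For `θ ≥ 0` the winning
probability is at most `E[exp (θ D)]`, which by independence is a product of Poisson moment
generating functions `E[exp (a N)] = exp (μ (eᵃ - 1))`. With the rates of the theorem this gives
`p t ≤ exp (C + t g(θ))`, where `g(θ) = λ₂ (exp (-θ/T₂) - 1) + λ₂' (exp (θ/T₂') - 1)`. Since
`g 0 = 0` and `g' 0 = λ₂'/T₂' - λ₂/T₂ < 0`, some `θ > 0` has `g θ < 0`, so `p t` decays
exponentially.
-/

open Real Filter Topology

/-- The probability mass function of a Poisson distribution with rate `μ ≥ 0`: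
`P(N = n) = e^{-μ} μ^n / n!` (for rate `0` this puts all mass on `n = 0`). -/
noncomputable def poissonPMF (μ : ℝ) (n : ℕ) : ℝ :=
  Real.exp (-μ) * μ ^ n / n.factorial

/-- `winProb T₁ T₂ T₁' T₂' μ₁ μ₂ μ₁' μ₂'` is the probability that
`N₁'/T₁' + N₂'/T₂' > N₁/T₁ + N₂/T₂` where `N₁, N₂, N₁', N₂'` are independent Poisson random
variables with rates `μ₁, μ₂, μ₁', μ₂'` (independence makes the joint distribution the
product of the marginals). -/
noncomputable def winProb (T₁ T₂ T₁' T₂' μ₁ μ₂ μ₁' μ₂' : ℝ) : ℝ :=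
  ∑' q : ℕ × ℕ × ℕ × ℕ,
    if (q.2.2.1 : ℝ) / T₁' + (q.2.2.2 : ℝ) / T₂' > (q.1 : ℝ) / T₁ + (q.2.1 : ℝ) / T₂
    then poissonPMF μ₁ q.1 * poissonPMF μ₂ q.2.1 * poissonPMF μ₁' q.2.2.1 *
      poissonPMF μ₂' q.2.2.2
    else 0

lemma poissonPMF_nonneg {μ : ℝ} (hμ : 0 ≤ μ) (n : ℕ) : 0 ≤ poissonPMF μ n := by
  unfold poissonPMF
  positivity

lemma hasSum_poissonPMF_mul_exp (μ a : ℝ) :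
    HasSum (fun n : ℕ => poissonPMF μ n * exp (a * n)) (exp (μ * (exp a - 1))) := by
  have hterm : ∀ n : ℕ, poissonPMF μ n * exp (a * n) = exp (-μ) * ((μ * exp a) ^ n / n.factorial) :=
    fun n => by
      rw [poissonPMF, mul_comm a, exp_nat_mul]
      ring
  have hexp := NormedSpace.expSeries_div_hasSum_exp (μ * exp a)
  rw [← exp_eq_exp_ℝ] at hexp
  rw [funext hterm, show μ * (exp a - 1) = -μ + μ * exp a by ring, exp_add]
  exact hexp.mul_left _

lemma HasSum.mul_of_nonneg {ι κ : Type*} {f : ι → ℝ} {g : κ → ℝ} {a b : ℝ}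
    (hf : HasSum f a) (hg : HasSum g b) (hf₀ : 0 ≤ f) (hg₀ : 0 ≤ g) :
    HasSum (fun x : ι × κ => f x.1 * g x.2) (a * b) :=
  hf.mul hg (hf.summable.mul_of_nonneg hg.summable hf₀ hg₀)

lemma HasSum.mul₄_of_nonneg {ι₁ ι₂ ι₃ ι₄ : Type*} {f₁ : ι₁ → ℝ} {f₂ : ι₂ → ℝ} {f₃ : ι₃ → ℝ}
    {f₄ : ι₄ → ℝ} {a₁ a₂ a₃ a₄ : ℝ} (h₁ : HasSum f₁ a₁) (h₂ : HasSum f₂ a₂) (h₃ : HasSum f₃ a₃)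
    (h₄ : HasSum f₄ a₄) (hf₁ : 0 ≤ f₁) (hf₂ : 0 ≤ f₂) (hf₃ : 0 ≤ f₃) (hf₄ : 0 ≤ f₄) :
    HasSum (fun q : ι₁ × ι₂ × ι₃ × ι₄ => f₁ q.1 * (f₂ q.2.1 * (f₃ q.2.2.1 * f₄ q.2.2.2)))
      (a₁ * (a₂ * (a₃ * a₄))) :=
  h₁.mul_of_nonneg (h₂.mul_of_nonneg (h₃.mul_of_nonneg h₄ hf₃ hf₄) hf₂
    fun q => mul_nonneg (hf₃ q.1) (hf₄ q.2)) hf₁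
    fun q => mul_nonneg (hf₂ q.1) (mul_nonneg (hf₃ q.2.1) (hf₄ q.2.2))

lemma ite_lt_le_mul_exp {a b w θ : ℝ} (hw : 0 ≤ w) (hθ : 0 ≤ θ) :
    (if b < a then w else 0) ≤ w * exp (θ * (a - b)) := by
  split_ifs with h
  · exact le_mul_of_one_le_right hw (one_le_exp (mul_nonneg hθ (sub_nonneg.2 h.le)))
  · exact mul_nonneg hw (exp_pos _).le

section winProb

variable {T₁ T₂ T₁' T₂' μ₁ μ₂ μ₁' μ₂' : ℝ}

lemma poissonPMF_mul₄_nonneg (hμ₁ : 0 ≤ μ₁) (hμ₂ : 0 ≤ μ₂) (hμ₁' : 0 ≤ μ₁') (hμ₂' : 0 ≤ μ₂')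
    (n₁ n₂ n₁' n₂' : ℕ) :
    0 ≤ poissonPMF μ₁ n₁ * poissonPMF μ₂ n₂ * poissonPMF μ₁' n₁' * poissonPMF μ₂' n₂' := by
  have := poissonPMF_nonneg hμ₁ n₁
  have := poissonPMF_nonneg hμ₂ n₂
  have := poissonPMF_nonneg hμ₁' n₁'
  have := poissonPMF_nonneg hμ₂' n₂'
  positivity

lemma winProb_nonneg (hμ₁ : 0 ≤ μ₁) (hμ₂ : 0 ≤ μ₂) (hμ₁' : 0 ≤ μ₁') (hμ₂' : 0 ≤ μ₂') :
    0 ≤ winProb T₁ T₂ T₁' T₂' μ₁ μ₂ μ₁' μ₂' :=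
  tsum_nonneg fun _ => ite_nonneg (poissonPMF_mul₄_nonneg hμ₁ hμ₂ hμ₁' hμ₂' ..) le_rfl

lemma winProb_le_exp {θ : ℝ} (hθ : 0 ≤ θ)
    (hμ₁ : 0 ≤ μ₁) (hμ₂ : 0 ≤ μ₂) (hμ₁' : 0 ≤ μ₁') (hμ₂' : 0 ≤ μ₂') :
    winProb T₁ T₂ T₁' T₂' μ₁ μ₂ μ₁' μ₂' ≤
      exp (μ₁ * (exp (-θ / T₁) - 1) + μ₂ * (exp (-θ / T₂) - 1)
        + μ₁' * (exp (θ / T₁') - 1) + μ₂' * (exp (θ / T₂') - 1)) := by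
  have tilted_nonneg : ∀ {μ} (a : ℝ), 0 ≤ μ → 0 ≤ fun n : ℕ => poissonPMF μ n * exp (a * n) :=
    fun a hμ n => mul_nonneg (poissonPMF_nonneg hμ n) (exp_pos _).le
  have hmgf := HasSum.mul₄_of_nonneg (hasSum_poissonPMF_mul_exp μ₁ (-θ / T₁))
    (hasSum_poissonPMF_mul_exp μ₂ (-θ / T₂)) (hasSum_poissonPMF_mul_exp μ₁' (θ / T₁'))
    (hasSum_poissonPMF_mul_exp μ₂' (θ / T₂')) (tilted_nonneg _ hμ₁) (tilted_nonneg _ hμ₂)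
    (tilted_nonneg _ hμ₁') (tilted_nonneg _ hμ₂')
  simp only [← exp_add] at hmgf
  have hle : ∀ q : ℕ × ℕ × ℕ × ℕ,
      (if (q.2.2.1 : ℝ) / T₁' + (q.2.2.2 : ℝ) / T₂' > (q.1 : ℝ) / T₁ + (q.2.1 : ℝ) / T₂
        then poissonPMF μ₁ q.1 * poissonPMF μ₂ q.2.1 * poissonPMF μ₁' q.2.2.1 *
          poissonPMF μ₂' q.2.2.2
        else 0) ≤
      poissonPMF μ₁ q.1 * exp (-θ / T₁ * q.1) * (poissonPMF μ₂ q.2.1 * exp (-θ / T₂ * q.2.1) *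
        (poissonPMF μ₁' q.2.2.1 * exp (θ / T₁' * q.2.2.1) *
          (poissonPMF μ₂' q.2.2.2 * exp (θ / T₂' * q.2.2.2)))) := by
    rintro ⟨n₁, n₂, n₁', n₂'⟩
    have hsplit : exp (θ * ((n₁' / T₁' + n₂' / T₂') - (n₁ / T₁ + n₂ / T₂))) =
        exp (-θ / T₁ * n₁) * exp (-θ / T₂ * n₂) * exp (θ / T₁' * n₁') * exp (θ / T₂' * n₂') := by
      simp only [← exp_add]
      ring_nf
    refine (ite_lt_le_mul_exp (poissonPMF_mul₄_nonneg hμ₁ hμ₂ hμ₁' hμ₂' ..) hθ).trans_eq ?_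
    rw [hsplit]
    ring
  refine (hasSum_le hle (Summable.of_nonneg_of_le
    (fun _ => ite_nonneg (poissonPMF_mul₄_nonneg hμ₁ hμ₂ hμ₁' hμ₂' ..) le_rfl) hle
    hmgf.summable).hasSum hmgf).trans_eq (congrArg exp (by ring))

end winProb

lemma exists_pos_lt_of_hasDerivAt_neg {f : ℝ → ℝ} {f' x : ℝ} (hf : HasDerivAt f f' x)
    (hf' : f' < 0) : ∃ y, x < y ∧ f y < f x := by
  obtain ⟨t, hslope, ht⟩ := ((hf.tendsto_slope_zero_right.eventually (Iio_mem_nhds hf')).and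
    self_mem_nhdsWithin).exists
  refine ⟨x + t, by linarith, ?_⟩
  rw [smul_eq_mul, mul_neg_iff] at hslope
  rcases hslope with ⟨-, h⟩ | ⟨h, -⟩
  · linarith
  · exact absurd h (inv_pos.2 ht).not_gt

lemma exists_pos_exp_drift_neg {lam T lam' T' : ℝ} (h : lam' / T' < lam / T) :
    ∃ θ, 0 < θ ∧ lam * (exp (-θ / T) - 1) + lam' * (exp (θ / T') - 1) < 0 := by
  have hderiv : HasDerivAt (fun θ => lam * (exp (-θ / T) - 1) + lam' * (exp (θ / T') - 1))
      (lam * (exp (-0 / T) * (-1 / T)) + lam' * (exp (0 / T') * (1 / T'))) 0 :=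
    ((((hasDerivAt_neg 0).div_const T).exp.sub_const 1).const_mul lam).add
      ((((hasDerivAt_id 0).div_const T').exp.sub_const 1).const_mul lam')
  obtain ⟨θ, hθ, hneg⟩ := exists_pos_lt_of_hasDerivAt_neg hderiv (by
    simp only [neg_zero, zero_div, exp_zero, one_mul]
    linarith [show lam * (-1 / T) = -(lam / T) by ring, show lam' * (1 / T') = lam' / T' by ring])
  exact ⟨θ, hθ, by simpa using hneg⟩

theorem theorem1_general (T₁ T₂ T₁' T₂' lam₁ lam₂ lam₁' lam₂' : ℝ)
    (hlam₁ : 0 < lam₁) (hlam₂ : 0 < lam₂) (hlam₁' : 0 < lam₁') (hlam₂' : 0 < lam₂')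
    (hrate : lam₁ / T₁ = lam₂ / T₂) (hrate' : lam₁' / T₁' = lam₂' / T₂')
    (hlt : lam₁' / T₁' < lam₁ / T₁)
    (t₁ t₁' : ℝ) (ht₁ : 0 ≤ t₁) (ht₁' : 0 ≤ t₁')
    (p : ℝ → ℝ)
    (hp : ∀ t, max t₁ t₁' ≤ t →
      p t = winProb T₁ T₂ T₁' T₂' (lam₁ * t₁) (lam₂ * (t - t₁)) (lam₁' * t₁')
        (lam₂' * (t - t₁'))) :
    Tendsto p atTop (𝓝 0) := by
  obtain ⟨θ, hθ, hdrift⟩ := exists_pos_exp_drift_neg (hrate ▸ hrate' ▸ hlt)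
  set C := lam₁ * t₁ * (exp (-θ / T₁) - 1) - lam₂ * t₁ * (exp (-θ / T₂) - 1)
    + lam₁' * t₁' * (exp (θ / T₁') - 1) - lam₂' * t₁' * (exp (θ / T₂') - 1)
  have hbound : Tendsto (fun t => exp (C + t * (lam₂ * (exp (-θ / T₂) - 1)
      + lam₂' * (exp (θ / T₂') - 1)))) atTop (𝓝 0) :=
    tendsto_exp_atBot.comp (tendsto_atBot_add_const_left _ C
      (tendsto_id.atTop_mul_const_of_neg hdrift))
  have hrates : ∀ᶠ t in atTop, max t₁ t₁' ≤ t ∧ 0 ≤ lam₁ * t₁ ∧ 0 ≤ lam₂ * (t - t₁) ∧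
      0 ≤ lam₁' * t₁' ∧ 0 ≤ lam₂' * (t - t₁') := by
    filter_upwards [eventually_ge_atTop (max t₁ t₁')] with t ht
    have := max_le_iff.1 ht
    refine ⟨ht, ?_, ?_, ?_, ?_⟩ <;> apply mul_nonneg <;> linarith
  refine tendsto_of_tendsto_of_tendsto_of_le_of_le' tendsto_const_nhds hbound ?_ ?_
  · filter_upwards [hrates] with t ⟨ht, hμ₁, hμ₂, hμ₁', hμ₂'⟩
    exact hp t ht ▸ winProb_nonneg hμ₁ hμ₂ hμ₁' hμ₂'
  · filter_upwards [hrates] with t ⟨ht, hμ₁, hμ₂, hμ₁', hμ₂'⟩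
    rw [hp t ht]
    exact (winProb_le_exp hθ.le hμ₁ hμ₂ hμ₁' hμ₂').trans_eq (congrArg exp (by ring))

/-- Theorem 1: Fix `T₁, T₂, T₁', T₂', λ₁, λ₂, λ₁', λ₂' > 0` with `T₂ ≥ T₁`,
`T₂' ≥ T₁'` and `λ₁/T₁ = λ₂/T₂ > λ₁'/T₁' = λ₂'/T₂'`, and fix `t₁ ≥ 0`, `t₁' ≥ 0`. For each
challenge period `t`, let `p(t)` be the probability that the malicious prover's overall
difficulty `N₁'(t)/T₁' + N₂'(t)/T₂'` exceeds the honest prover's overall difficulty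
`N₁(t)/T₁ + N₂(t)/T₂`, where the four variables are independent Poisson with rates
`λ₁t₁, λ₂(t−t₁), λ₁'t₁', λ₂'(t−t₁')`. Then `p(t) → 0` as `t → ∞`. -/
theorem theorem1 (T₁ T₂ T₁' T₂' lam₁ lam₂ lam₁' lam₂' : ℝ)
    (hT₁ : 0 < T₁) (hT₂ : 0 < T₂) (hT₁' : 0 < T₁') (hT₂' : 0 < T₂')
    (hlam₁ : 0 < lam₁) (hlam₂ : 0 < lam₂) (hlam₁' : 0 < lam₁') (hlam₂' : 0 < lam₂')
    (hT : T₁ ≤ T₂) (hT' : T₁' ≤ T₂')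
    (hrate : lam₁ / T₁ = lam₂ / T₂) (hrate' : lam₁' / T₁' = lam₂' / T₂')
    (hlt : lam₁' / T₁' < lam₁ / T₁)
    (t₁ t₁' : ℝ) (ht₁ : 0 ≤ t₁) (ht₁' : 0 ≤ t₁')
    (p : ℝ → ℝ)
    (hp : ∀ t, max t₁ t₁' ≤ t →
      p t = winProb T₁ T₂ T₁' T₂' (lam₁ * t₁) (lam₂ * (t - t₁)) (lam₁' * t₁')
        (lam₂' * (t - t₁'))) :
    Tendsto p atTop (𝓝 0) :=
  theorem1_general T₁ T₂ T₁' T₂' lam₁ lam₂ lam₁' lam₂' hlam₁ hlam₂ hlam₁' hlam₂' hrate hrate' hlt t₁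
    t₁' ht₁ ht₁' p hp
end
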